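/- Let 𝒰, 𝒦, 𝒱, 𝒲, 𝒳, 𝒴, 𝒵 be finite types, Q1 a channel from 𝒳 to 𝒴, Q2 a channel from 𝒴 to 𝒵, and n a positive integer. Let U, K, V, W be jointly distributed random variables, let X^n = f(U,K) ∈ 𝒳^n for some function f, and let Y^n, Z^n be random vectors whose joint conditional law given (U,K,V,W) is P(Y^n=y^n, Z^n=z^n | U,K,V,W) = ∏_{i=1}^n Q1(y_i | X_i)·Q2(z_i | y_i) (a degraded memoryless broadcast channel fed by X^n). Then I(U; (K,Y^n) | (W,V)) − I(U; (K,Z^n) | (W,V)) ≤ ∑_{i=1}^n I(X_i; Y_i | (Z_i, Y^{i−1}, K, W, V)), where Y^{i−1} = (Y_1,…,Y_{i−1}). -/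
import Mathlib


open scoped BigOperators

set_option synthInstance.maxSize 1000

/-- The probability that a random variable `X` on the finite probability space `(Ω, μ)`
takes the value `a`. -/
noncomputable def prob {Ω α : Type} [Fintype Ω] [DecidableEq α]
    (μ : Ω → ℝ) (X : Ω → α) (a : α) : ℝ :=
  ∑ ω, if X ω = a then μ ω else 0

/-- Shannon entropy (natural logarithm) of `X`. -/
noncomputable def entH {Ω α : Type} [Fintype Ω] [Fintype α] [DecidableEq α]
    (μ : Ω → ℝ) (X : Ω → α) : ℝ :=
  -∑ a, prob μ X a * Real.log (prob μ X a)

/-- Conditional entropy `H(X|Y) = H(X,Y) - H(Y)`. -/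
noncomputable def condH {Ω α β : Type} [Fintype Ω] [Fintype α] [DecidableEq α]
    [Fintype β] [DecidableEq β] (μ : Ω → ℝ) (X : Ω → α) (Y : Ω → β) : ℝ :=
  entH μ (fun ω => (X ω, Y ω)) - entH μ Y

/-- Mutual information `I(X;Y) = H(X) + H(Y) - H(X,Y)`. -/
noncomputable def MI {Ω α β : Type} [Fintype Ω] [Fintype α] [DecidableEq α]
    [Fintype β] [DecidableEq β] (μ : Ω → ℝ) (X : Ω → α) (Y : Ω → β) : ℝ :=
  entH μ X + entH μ Y - entH μ (fun ω => (X ω, Y ω))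

/-- Conditional mutual information
`I(X;Y|Z) = H(X,Z) + H(Y,Z) - H(X,Y,Z) - H(Z)`. -/
noncomputable def condMI {Ω α β γ : Type} [Fintype Ω] [Fintype α] [DecidableEq α]
    [Fintype β] [DecidableEq β] [Fintype γ] [DecidableEq γ]
    (μ : Ω → ℝ) (X : Ω → α) (Y : Ω → β) (Z : Ω → γ) : ℝ :=
  entH μ (fun ω => (X ω, Z ω)) + entH μ (fun ω => (Y ω, Z ω))
    - entH μ (fun ω => (X ω, Y ω, Z ω)) - entH μ Z

/-- `A` is conditionally independent of `B` given `C`: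
`P(A=a, B=b | C=c) = P(A=a|C=c)·P(B=b|C=c)` whenever `P(C=c) > 0`
(stated multiplicatively). -/
def CondIndep {Ω α β γ : Type} [Fintype Ω] [DecidableEq α] [DecidableEq β] [DecidableEq γ]
    (μ : Ω → ℝ) (A : Ω → α) (B : Ω → β) (C : Ω → γ) : Prop :=
  ∀ a b c, 0 < prob μ C c →
    prob μ (fun ω => (A ω, B ω, C ω)) (a, b, c) * prob μ C c =
      prob μ (fun ω => (A ω, C ω)) (a, c) * prob μ (fun ω => (B ω, C ω)) (b, c)

set_option linter.unusedSectionVars false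
set_option maxHeartbeats 1000000
section basics
variable {Ω α β γ : Type} [Fintype Ω] [DecidableEq α] [DecidableEq β] [DecidableEq γ]
variable (μ : Ω → ℝ)

lemma prob_nonneg (hμ0 : ∀ ω, 0 ≤ μ ω) (X : Ω → α) (a : α) : 0 ≤ prob μ X a := by
  apply Finset.sum_nonneg; intro ω _
  split
  · exact hμ0 ω
  · exact le_refl 0

lemma prob_le_of_imp (hμ0 : ∀ ω, 0 ≤ μ ω) (X : Ω → α) (X' : Ω → β) (a : α) (b : β)
    (h : ∀ ω, X ω = a → X' ω = b) : prob μ X a ≤ prob μ X' b := by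
  apply Finset.sum_le_sum; intro ω _
  by_cases hx : X ω = a
  · rw [if_pos hx, if_pos (h ω hx)]
  · rw [if_neg hx]
    split
    · exact hμ0 ω
    · exact le_refl 0

lemma sum_fiber [Fintype α] (X : Ω → α) (g : α → ℝ) :
    ∑ ω, μ ω * g (X ω) = ∑ a, prob μ X a * g a := by
  unfold prob
  simp_rw [Finset.sum_mul, ite_mul, zero_mul]
  rw [Finset.sum_comm]
  congr 1; funext ω
  rw [Finset.sum_eq_single (X ω)]
  · simp
  · intro a _ ha
    simp only [ite_eq_right_iff]
    exact fun h1 => absurd h1.symm ha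
  · simp

lemma prob_comp [Fintype α] (X : Ω → α) (h : α → β) (b : β) :
    prob μ (fun ω => h (X ω)) b = ∑ a, if h a = b then prob μ X a else 0 := by
  unfold prob
  have key : ∀ a : α, (if h a = b then (∑ ω, if X ω = a then μ ω else 0) else 0)
      = ∑ ω, if X ω = a ∧ h a = b then μ ω else 0 := by
    intro a; split_ifs with hb <;> simp [hb]
  simp only [key]
  rw [Finset.sum_comm]
  congr 1; funext ω
  rw [Finset.sum_eq_single (X ω)]
  · simp
  · intro a _ ha
    simp only [ite_eq_right_iff, and_imp]
    exact fun h1 _ => absurd h1.symm ha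
  · simp

lemma prob_marg [Fintype α] (X : Ω → α) (C : Ω → γ) (c : γ) :
    ∑ a, prob μ (fun ω => (X ω, C ω)) (a, c) = prob μ C c := by
  unfold prob
  rw [Finset.sum_comm]
  congr 1; funext ω
  rw [Finset.sum_eq_single (X ω)]
  · simp [Prod.ext_iff]
  · intro a _ ha
    simp only [Prod.mk.injEq, ite_eq_right_iff, and_imp]
    exact fun h1 _ => absurd h1.symm ha
  · simp

lemma prob_total [Fintype α] (X : Ω → α) : ∑ a, prob μ X a = ∑ ω, μ ω := by
  unfold prob
  rw [Finset.sum_comm]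
  congr 1; funext ω
  rw [Finset.sum_eq_single (X ω)]
  · simp
  · intro a _ ha
    simp only [ite_eq_right_iff]
    exact fun h1 => absurd h1.symm ha
  · simp

lemma entH_eq [Fintype α] (X : Ω → α) :
    entH μ X = -∑ ω, μ ω * Real.log (prob μ X (X ω)) := by
  rw [entH, sum_fiber μ X (fun a => Real.log (prob μ X a))]

lemma prob_congr {X : Ω → α} {X' : Ω → β}
    (h : ∀ ω ω', X ω = X ω' ↔ X' ω = X' ω') (ω : Ω) :
    prob μ X (X ω) = prob μ X' (X' ω) := by
  unfold prob
  congr 1; funext ω'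
  by_cases hx : X ω' = X ω
  · rw [if_pos hx, if_pos ((h ω' ω).mp hx)]
  · rw [if_neg hx, if_neg (fun hh => hx ((h ω' ω).mpr hh))]

lemma entH_congr [Fintype α] [Fintype β] {X : Ω → α} {X' : Ω → β}
    (h : ∀ ω ω', X ω = X ω' ↔ X' ω = X' ω') :
    entH μ X = entH μ X' := by
  rw [entH_eq, entH_eq]
  congr 1; apply Finset.sum_congr rfl; intro ω _
  rw [prob_congr μ h ω]

end basics

section cmi
variable {Ω α α' β β' γ γ' : Type} [Fintype Ω]
  [Fintype α] [DecidableEq α] [Fintype α'] [DecidableEq α']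
  [Fintype β] [DecidableEq β] [Fintype β'] [DecidableEq β']
  [Fintype γ] [DecidableEq γ] [Fintype γ'] [DecidableEq γ']
variable (μ : Ω → ℝ)

set_option linter.unusedSectionVars false

lemma condMI_symm (A : Ω → α) (B : Ω → β) (C : Ω → γ) :
    condMI μ A B C = condMI μ B A C := by
  have h : entH μ (fun ω => (A ω, B ω, C ω)) = entH μ (fun ω => (B ω, A ω, C ω)) :=
    entH_congr μ (fun ω ω' => by simp only [Prod.ext_iff]; tauto)
  simp only [condMI, h]; ring

lemma condMI_congr {A : Ω → α} {A' : Ω → α'} {B : Ω → β} {B' : Ω → β'}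
    {C : Ω → γ} {C' : Ω → γ'}
    (hAC : ∀ ω ω', (A ω = A ω' ∧ C ω = C ω') ↔ (A' ω = A' ω' ∧ C' ω = C' ω'))
    (hBC : ∀ ω ω', (B ω = B ω' ∧ C ω = C ω') ↔ (B' ω = B' ω' ∧ C' ω = C' ω'))
    (hC : ∀ ω ω', C ω = C ω' ↔ C' ω = C' ω') :
    condMI μ A B C = condMI μ A' B' C' := by
  have e1 : entH μ (fun ω => (A ω, C ω)) = entH μ (fun ω => (A' ω, C' ω)) :=
    entH_congr μ (fun ω ω' => by simp only [Prod.ext_iff]; exact hAC ω ω')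
  have e2 : entH μ (fun ω => (B ω, C ω)) = entH μ (fun ω => (B' ω, C' ω)) :=
    entH_congr μ (fun ω ω' => by simp only [Prod.ext_iff]; exact hBC ω ω')
  have e3 : entH μ (fun ω => (A ω, B ω, C ω)) = entH μ (fun ω => (A' ω, B' ω, C' ω)) :=
    entH_congr μ (fun ω ω' => by
      have h1 := hAC ω ω'; have h2 := hBC ω ω'
      simp only [Prod.ext_iff]; tauto)
  have e4 : entH μ C = entH μ C' := entH_congr μ hC
  simp only [condMI, e1, e2, e3, e4]

lemma condMI_chain (A : Ω → α) (A' : Ω → α') (B : Ω → β) (C : Ω → γ) :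
    condMI μ (fun ω => (A ω, A' ω)) B C
      = condMI μ A B C + condMI μ A' B (fun ω => (A ω, C ω)) := by
  have h1 : entH μ (fun ω => (A' ω, A ω, C ω)) = entH μ (fun ω => ((A ω, A' ω), C ω)) :=
    entH_congr μ (fun ω ω' => by simp only [Prod.ext_iff]; tauto)
  have h2 : entH μ (fun ω => (B ω, A ω, C ω)) = entH μ (fun ω => (A ω, B ω, C ω)) :=
    entH_congr μ (fun ω ω' => by simp only [Prod.ext_iff]; tauto)
  have h3 : entH μ (fun ω => (A' ω, B ω, A ω, C ω))
      = entH μ (fun ω => ((A ω, A' ω), B ω, C ω)) :=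
    entH_congr μ (fun ω ω' => by simp only [Prod.ext_iff]; tauto)
  simp only [condMI, h1, h2, h3]; ring

lemma condMI_rep (A : Ω → α) (B : Ω → β) (C : Ω → γ) :
    condMI μ A B C = ∑ t : α × β × γ,
      prob μ (fun ω => (A ω, B ω, C ω)) t *
        (Real.log (prob μ (fun ω => (A ω, B ω, C ω)) t)
          + Real.log (prob μ C t.2.2)
          - Real.log (prob μ (fun ω => (A ω, C ω)) (t.1, t.2.2))
          - Real.log (prob μ (fun ω => (B ω, C ω)) (t.2.1, t.2.2))) := by
  rw [← sum_fiber μ (fun ω => (A ω, B ω, C ω))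
      (fun t => Real.log (prob μ (fun ω => (A ω, B ω, C ω)) t)
          + Real.log (prob μ C t.2.2)
          - Real.log (prob μ (fun ω => (A ω, C ω)) (t.1, t.2.2))
          - Real.log (prob μ (fun ω => (B ω, C ω)) (t.2.1, t.2.2)))]
  simp only [condMI, entH_eq]
  have key : ∀ (f1 f2 f3 f4 : Ω → ℝ),
      -(∑ ω, f1 ω) + -(∑ ω, f2 ω) - -(∑ ω, f3 ω) - -(∑ ω, f4 ω)
        = ∑ ω, (f3 ω + f4 ω - f1 ω - f2 ω) := by
    intro f1 f2 f3 f4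
    simp only [Finset.sum_add_distrib, Finset.sum_sub_distrib]; ring
  rw [key]
  apply Finset.sum_congr rfl; intro ω _; ring

lemma condMI_nonneg (hμ0 : ∀ ω, 0 ≤ μ ω) (hμ1 : ∑ ω, μ ω = 1)
    (A : Ω → α) (B : Ω → β) (C : Ω → γ) :
    0 ≤ condMI μ A B C := by
  classical
  rw [condMI_rep]
  set pABC := prob μ (fun ω => (A ω, B ω, C ω)) with hpABC
  set pAC := prob μ (fun ω => (A ω, C ω)) with hpAC
  set pBC := prob μ (fun ω => (B ω, C ω)) with hpBC
  set pC := prob μ C with hpC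
  have h0ABC : ∀ t, 0 ≤ pABC t := fun t => prob_nonneg μ hμ0 _ t
  have h0AC : ∀ t, 0 ≤ pAC t := fun t => prob_nonneg μ hμ0 _ t
  have h0BC : ∀ t, 0 ≤ pBC t := fun t => prob_nonneg μ hμ0 _ t
  have h0C : ∀ c, 0 ≤ pC c := fun c => prob_nonneg μ hμ0 _ c
  have key : ∀ t : α × β × γ,
      pABC t - (if pC t.2.2 = 0 then (0:ℝ)
          else pAC (t.1, t.2.2) * pBC (t.2.1, t.2.2) / pC t.2.2)
      ≤ pABC t * (Real.log (pABC t) + Real.log (pC t.2.2)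
        - Real.log (pAC (t.1, t.2.2)) - Real.log (pBC (t.2.1, t.2.2))) := by
    intro t
    by_cases ht : pABC t = 0
    · rw [ht]
      simp only [zero_mul, zero_sub, neg_nonpos]
      split
      · exact le_refl 0
      · exact div_nonneg (mul_nonneg (h0AC _) (h0BC _)) (h0C _)
    · have htpos : 0 < pABC t := lt_of_le_of_ne (h0ABC t) (Ne.symm ht)
      have hCge : pABC t ≤ pC t.2.2 := by
        rw [hpABC, hpC]
        exact prob_le_of_imp μ hμ0 _ _ _ _ (fun ω h => by rw [← h])
      have hACge : pABC t ≤ pAC (t.1, t.2.2) := by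
        rw [hpABC, hpAC]
        exact prob_le_of_imp μ hμ0 _ _ _ _ (fun ω h => by rw [← h])
      have hBCge : pABC t ≤ pBC (t.2.1, t.2.2) := by
        rw [hpABC, hpBC]
        exact prob_le_of_imp μ hμ0 _ _ _ _ (fun ω h => by rw [← h])
      have hCpos : 0 < pC t.2.2 := lt_of_lt_of_le htpos hCge
      have hACpos : 0 < pAC (t.1, t.2.2) := lt_of_lt_of_le htpos hACge
      have hBCpos : 0 < pBC (t.2.1, t.2.2) := lt_of_lt_of_le htpos hBCge
      rw [if_neg (ne_of_gt hCpos)]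
      set D := pAC (t.1, t.2.2) * pBC (t.2.1, t.2.2) with hD
      set N := pABC t * pC t.2.2 with hN
      have hDpos : 0 < D := mul_pos hACpos hBCpos
      have hNpos : 0 < N := mul_pos htpos hCpos
      have hlog : Real.log (pABC t) + Real.log (pC t.2.2)
          - Real.log (pAC (t.1, t.2.2)) - Real.log (pBC (t.2.1, t.2.2))
          = -Real.log (D / N) := by
        rw [Real.log_div (ne_of_gt hDpos) (ne_of_gt hNpos), hD, hN,
          Real.log_mul (ne_of_gt hACpos) (ne_of_gt hBCpos),
          Real.log_mul (ne_of_gt htpos) (ne_of_gt hCpos)]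
        ring
      rw [hlog]
      have hle := Real.log_le_sub_one_of_pos (div_pos hDpos hNpos)
      have h2 : 1 - D / N ≤ -Real.log (D / N) := by linarith
      have hstep : pABC t - D / pC t.2.2 = pABC t * (1 - D / N) := by
        rw [hN]; field_simp
      rw [hstep]
      exact mul_le_mul_of_nonneg_left h2 (le_of_lt htpos)
  have hsum : ∑ t : α × β × γ, (pABC t - (if pC t.2.2 = 0 then (0:ℝ)
      else pAC (t.1, t.2.2) * pBC (t.2.1, t.2.2) / pC t.2.2)) = 0 := by
    rw [Finset.sum_sub_distrib]
    have h1 : ∑ t : α × β × γ, pABC t = 1 := by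
      rw [hpABC, prob_total, hμ1]
    have h2 : ∑ t : α × β × γ, (if pC t.2.2 = 0 then (0:ℝ)
        else pAC (t.1, t.2.2) * pBC (t.2.1, t.2.2) / pC t.2.2) = 1 := by
      have e1 : ∑ t : α × β × γ, (if pC t.2.2 = 0 then (0:ℝ)
          else pAC (t.1, t.2.2) * pBC (t.2.1, t.2.2) / pC t.2.2)
          = ∑ a, ∑ b, ∑ c, (if pC c = 0 then (0:ℝ)
            else pAC (a, c) * pBC (b, c) / pC c) := by
        rw [Fintype.sum_prod_type]
        apply Finset.sum_congr rfl; intro a _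
        rw [Fintype.sum_prod_type]
      rw [e1]
      have e2 : ∑ a, ∑ b, ∑ c, (if pC c = 0 then (0:ℝ)
            else pAC (a, c) * pBC (b, c) / pC c)
          = ∑ c, ∑ a, ∑ b, (if pC c = 0 then (0:ℝ)
            else pAC (a, c) * pBC (b, c) / pC c) := by
        have step : (∑ a, ∑ b, ∑ c, (if pC c = 0 then (0:ℝ)
              else pAC (a, c) * pBC (b, c) / pC c))
            = ∑ a, ∑ c, ∑ b, (if pC c = 0 then (0:ℝ)
              else pAC (a, c) * pBC (b, c) / pC c) :=
          Finset.sum_congr rfl (fun a _ => Finset.sum_comm)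
        rw [step, Finset.sum_comm]
      rw [e2]
      simp only [hpAC, hpBC, hpC]
      have e3 : ∀ c, (∑ a, ∑ b, (if prob μ C c = 0 then (0:ℝ)
          else prob μ (fun ω => (A ω, C ω)) (a, c)
            * prob μ (fun ω => (B ω, C ω)) (b, c) / prob μ C c))
          = prob μ C c := by
        intro c
        by_cases hc : prob μ C c = 0
        · simp [hc]
        · simp only [if_neg hc]
          have e4 : ∀ a, (∑ b, prob μ (fun ω => (A ω, C ω)) (a, c)
              * prob μ (fun ω => (B ω, C ω)) (b, c) / prob μ C c)
              = prob μ (fun ω => (A ω, C ω)) (a, c) * prob μ C c / prob μ C c := by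
            intro a
            rw [← Finset.sum_div, ← Finset.mul_sum, prob_marg]
          rw [Finset.sum_congr rfl (fun a _ => e4 a), ← Finset.sum_div,
            ← Finset.sum_mul, prob_marg]
          field_simp
      rw [Finset.sum_congr rfl (fun c _ => e3 c), prob_total, hμ1]
    rw [h1, h2]; ring
  calc (0:ℝ) = ∑ t : α × β × γ, (pABC t - (if pC t.2.2 = 0 then (0:ℝ)
      else pAC (t.1, t.2.2) * pBC (t.2.1, t.2.2) / pC t.2.2)) := hsum.symm
    _ ≤ _ := Finset.sum_le_sum (fun t _ => key t)

lemma condMI_zero (hμ0 : ∀ ω, 0 ≤ μ ω)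
    {A : Ω → α} {B : Ω → β} {C : Ω → γ} (h : CondIndep μ A B C) :
    condMI μ A B C = 0 := by
  rw [condMI_rep]
  apply Finset.sum_eq_zero
  intro t _
  by_cases ht : prob μ (fun ω => (A ω, B ω, C ω)) t = 0
  · rw [ht, zero_mul]
  · have htpos : 0 < prob μ (fun ω => (A ω, B ω, C ω)) t :=
      lt_of_le_of_ne (prob_nonneg μ hμ0 _ t) (Ne.symm ht)
    have hCpos : 0 < prob μ C t.2.2 :=
      lt_of_lt_of_le htpos (prob_le_of_imp μ hμ0 _ _ _ _ (fun ω hh => by rw [← hh]))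
    have heq := h t.1 t.2.1 t.2.2 hCpos
    have hteta : (t.1, t.2.1, t.2.2) = t := rfl
    rw [hteta] at heq
    have hDpos : 0 < prob μ (fun ω => (A ω, C ω)) (t.1, t.2.2)
        * prob μ (fun ω => (B ω, C ω)) (t.2.1, t.2.2) := by
      rw [← heq]; exact mul_pos htpos hCpos
    have hACpos : 0 < prob μ (fun ω => (A ω, C ω)) (t.1, t.2.2) :=
      lt_of_le_of_ne (prob_nonneg μ hμ0 _ _) (by
        intro hz; rw [← hz] at hDpos; simp at hDpos)
    have hBCpos : 0 < prob μ (fun ω => (B ω, C ω)) (t.2.1, t.2.2) :=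
      lt_of_le_of_ne (prob_nonneg μ hμ0 _ _) (by
        intro hz; rw [← hz] at hDpos; simp at hDpos)
    have : Real.log (prob μ (fun ω => (A ω, B ω, C ω)) t) + Real.log (prob μ C t.2.2)
        - Real.log (prob μ (fun ω => (A ω, C ω)) (t.1, t.2.2))
        - Real.log (prob μ (fun ω => (B ω, C ω)) (t.2.1, t.2.2)) = 0 := by
      rw [← Real.log_mul (ne_of_gt htpos) (ne_of_gt hCpos), heq,
        Real.log_mul (ne_of_gt hACpos) (ne_of_gt hBCpos)]
      ring
    rw [this, mul_zero]

end cmi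

section pin
variable {ι 𝒯 : Type} [Fintype ι] [DecidableEq ι] [Fintype 𝒯] [DecidableEq 𝒯]

lemma sum_pi_pinned (cond : ι → Prop) [DecidablePred cond] (v : ι → 𝒯) (Φ : ι → 𝒯 → ℝ) :
    ∑ g : ι → 𝒯, (if (∀ j, cond j → g j = v j) then ∏ j, Φ j (g j) else 0)
      = ∏ j, (if cond j then Φ j (v j) else ∑ y, Φ j y) := by
  classical
  have key : ∀ g : ι → 𝒯, (if (∀ j, cond j → g j = v j) then ∏ j, Φ j (g j) else 0)
      = ∏ j, (if cond j then (if g j = v j then Φ j (g j) else 0) else Φ j (g j)) := by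
    intro g
    by_cases hg : ∀ j, cond j → g j = v j
    · rw [if_pos hg]; apply Finset.prod_congr rfl; intro j _
      by_cases hc : cond j
      · rw [if_pos hc, if_pos (hg j hc)]
      · rw [if_neg hc]
    · rw [if_neg hg]
      push_neg at hg; obtain ⟨j0, hc0, hne⟩ := hg
      symm
      apply Finset.prod_eq_zero (Finset.mem_univ j0)
      rw [if_pos hc0, if_neg hne]
  simp only [key]
  have := Finset.prod_univ_sum (fun _ : ι => (Finset.univ : Finset 𝒯))
    (fun j y => if cond j then (if y = v j then Φ j y else 0) else Φ j y)
  rw [Fintype.piFinset_univ] at this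
  rw [← this]
  apply Finset.prod_congr rfl; intro j _
  by_cases hc : cond j
  · simp [hc]
  · simp [hc]

end pin

section core
variable {𝒰 𝒦 𝒱 𝒲 𝒳 𝒴 𝒵 : Type}
  [Fintype 𝒰] [DecidableEq 𝒰] [Fintype 𝒦] [DecidableEq 𝒦]
  [Fintype 𝒱] [DecidableEq 𝒱] [Fintype 𝒲] [DecidableEq 𝒲]
  [Fintype 𝒴] [DecidableEq 𝒴] [Fintype 𝒵] [DecidableEq 𝒵]

/-- Core evaluation of a constrained sum over the master configuration space. -/
lemma core_sum {n : ℕ} (Q1 : 𝒳 → 𝒴 → ℝ) (Q2 : 𝒴 → 𝒵 → ℝ)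
    (f : 𝒰 × 𝒦 → Fin n → 𝒳) (pU : 𝒰 × 𝒦 × 𝒱 × 𝒲 → ℝ)
    (k : 𝒦) (v : 𝒱) (w : 𝒲)
    (condY : Fin n → Prop) [DecidablePred condY] (vY : Fin n → 𝒴)
    (condZ : Fin n → Prop) [DecidablePred condZ] (vZ : Fin n → 𝒵)
    (RU : 𝒰 → Prop) [DecidablePred RU] :
    ∑ ys : Fin n → 𝒴, ∑ zs : Fin n → 𝒵, ∑ u' : 𝒰, ∑ k' : 𝒦, ∑ v' : 𝒱, ∑ w' : 𝒲,
      (if ((∀ j, condY j → ys j = vY j) ∧ (∀ j, condZ j → zs j = vZ j)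
            ∧ RU u' ∧ k' = k ∧ v' = v ∧ w' = w)
        then (∏ j, Q1 (f (u', k') j) (ys j) * Q2 (ys j) (zs j)) * pU (u', k', v', w')
        else 0)
      = ∑ u' : 𝒰, (if RU u'
          then (∏ j, (if condY j
            then (if condZ j
              then Q1 (f (u', k) j) (vY j) * Q2 (vY j) (vZ j)
              else ∑ z', Q1 (f (u', k) j) (vY j) * Q2 (vY j) z')
            else ∑ y, (if condZ j
              then Q1 (f (u', k) j) y * Q2 y (vZ j)
              else ∑ z', Q1 (f (u', k) j) y * Q2 y z')))
            * pU (u', k, v, w)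
          else 0) := by
  classical
  -- collapse w', v', k'
  have cw : ∀ (ys : Fin n → 𝒴) (zs : Fin n → 𝒵) (u' : 𝒰) (k' : 𝒦) (v' : 𝒱),
      (∑ w' : 𝒲, if ((∀ j, condY j → ys j = vY j) ∧ (∀ j, condZ j → zs j = vZ j)
            ∧ RU u' ∧ k' = k ∧ v' = v ∧ w' = w)
        then (∏ j, Q1 (f (u', k') j) (ys j) * Q2 (ys j) (zs j)) * pU (u', k', v', w')
        else 0)
      = if ((∀ j, condY j → ys j = vY j) ∧ (∀ j, condZ j → zs j = vZ j)
            ∧ RU u' ∧ k' = k ∧ v' = v)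
        then (∏ j, Q1 (f (u', k') j) (ys j) * Q2 (ys j) (zs j)) * pU (u', k', v', w)
        else 0 := by
    intro ys zs u' k' v'
    rw [Finset.sum_eq_single w]
    · simp
    · intro w' _ hne
      rw [if_neg (fun hh => hne hh.2.2.2.2.2)]
    · intro h; exact absurd (Finset.mem_univ w) h
  simp only [cw]
  have cv : ∀ (ys : Fin n → 𝒴) (zs : Fin n → 𝒵) (u' : 𝒰) (k' : 𝒦),
      (∑ v' : 𝒱, if ((∀ j, condY j → ys j = vY j) ∧ (∀ j, condZ j → zs j = vZ j)
            ∧ RU u' ∧ k' = k ∧ v' = v)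
        then (∏ j, Q1 (f (u', k') j) (ys j) * Q2 (ys j) (zs j)) * pU (u', k', v', w)
        else 0)
      = if ((∀ j, condY j → ys j = vY j) ∧ (∀ j, condZ j → zs j = vZ j)
            ∧ RU u' ∧ k' = k)
        then (∏ j, Q1 (f (u', k') j) (ys j) * Q2 (ys j) (zs j)) * pU (u', k', v, w)
        else 0 := by
    intro ys zs u' k'
    rw [Finset.sum_eq_single v]
    · simp
    · intro v' _ hne
      rw [if_neg (fun hh => hne hh.2.2.2.2)]
    · intro h; exact absurd (Finset.mem_univ v) h
  simp only [cv]
  have ck : ∀ (ys : Fin n → 𝒴) (zs : Fin n → 𝒵) (u' : 𝒰),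
      (∑ k' : 𝒦, if ((∀ j, condY j → ys j = vY j) ∧ (∀ j, condZ j → zs j = vZ j)
            ∧ RU u' ∧ k' = k)
        then (∏ j, Q1 (f (u', k') j) (ys j) * Q2 (ys j) (zs j)) * pU (u', k', v, w)
        else 0)
      = if ((∀ j, condY j → ys j = vY j) ∧ (∀ j, condZ j → zs j = vZ j) ∧ RU u')
        then (∏ j, Q1 (f (u', k) j) (ys j) * Q2 (ys j) (zs j)) * pU (u', k, v, w)
        else 0 := by
    intro ys zs u'
    rw [Finset.sum_eq_single k]
    · simp
    · intro k' _ hne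
      rw [if_neg (fun hh => hne hh.2.2.2)]
    · intro h; exact absurd (Finset.mem_univ k) h
  simp only [ck]
  -- move u' sum to the outside
  rw [show (∑ ys : Fin n → 𝒴, ∑ zs : Fin n → 𝒵, ∑ u' : 𝒰,
      (if ((∀ j, condY j → ys j = vY j) ∧ (∀ j, condZ j → zs j = vZ j) ∧ RU u')
        then (∏ j, Q1 (f (u', k) j) (ys j) * Q2 (ys j) (zs j)) * pU (u', k, v, w)
        else 0))
    = ∑ u' : 𝒰, ∑ ys : Fin n → 𝒴, ∑ zs : Fin n → 𝒵,
      (if ((∀ j, condY j → ys j = vY j) ∧ (∀ j, condZ j → zs j = vZ j) ∧ RU u')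
        then (∏ j, Q1 (f (u', k) j) (ys j) * Q2 (ys j) (zs j)) * pU (u', k, v, w)
        else 0) from by
      rw [Finset.sum_congr rfl (fun ys _ => (Finset.sum_comm : _ = ∑ u' : 𝒰, ∑ zs : Fin n → 𝒵, _)), Finset.sum_comm]]
  apply Finset.sum_congr rfl
  intro u' _
  by_cases hR : RU u'
  · rw [if_pos hR]
    simp only [hR, and_true]
    -- pull out pU and split the condition
    have pull : ∀ (ys : Fin n → 𝒴) (zs : Fin n → 𝒵),
        (if ((∀ j, condY j → ys j = vY j) ∧ (∀ j, condZ j → zs j = vZ j))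
          then (∏ j, Q1 (f (u', k) j) (ys j) * Q2 (ys j) (zs j)) * pU (u', k, v, w)
          else 0)
        = (if (∀ j, condY j → ys j = vY j)
            then (if (∀ j, condZ j → zs j = vZ j)
              then (∏ j, Q1 (f (u', k) j) (ys j) * Q2 (ys j) (zs j)) else 0)
            else 0) * pU (u', k, v, w) := by
      intro ys zs
      split_ifs with h1 h2 h3 <;> first | rfl | (exfalso; tauto) | simp
    simp only [pull]
    simp_rw [← Finset.sum_mul]
    congr 1
    have pushin : ∀ ys : Fin n → 𝒴,
        (∑ zs : Fin n → 𝒵, (if (∀ j, condY j → ys j = vY j)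
          then (if (∀ j, condZ j → zs j = vZ j)
            then (∏ j, Q1 (f (u', k) j) (ys j) * Q2 (ys j) (zs j)) else 0)
          else 0))
        = (if (∀ j, condY j → ys j = vY j)
          then (∑ zs : Fin n → 𝒵, (if (∀ j, condZ j → zs j = vZ j)
            then (∏ j, Q1 (f (u', k) j) (ys j) * Q2 (ys j) (zs j)) else 0))
          else 0) := by
      intro ys; split_ifs <;> simp
    simp only [pushin]
    have inner : ∀ ys : Fin n → 𝒴,
        (∑ zs : Fin n → 𝒵, (if (∀ j, condZ j → zs j = vZ j)
          then (∏ j, Q1 (f (u', k) j) (ys j) * Q2 (ys j) (zs j)) else 0))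
        = ∏ j, (if condZ j then Q1 (f (u', k) j) (ys j) * Q2 (ys j) (vZ j)
            else ∑ z', Q1 (f (u', k) j) (ys j) * Q2 (ys j) z') := by
      intro ys
      convert sum_pi_pinned condZ vZ
        (fun j z' => Q1 (f (u', k) j) (ys j) * Q2 (ys j) z') using 2
      congr
    simp only [inner]
    convert sum_pi_pinned condY vY
      (fun j y => if condZ j then Q1 (f (u', k) j) y * Q2 y (vZ j)
        else ∑ z', Q1 (f (u', k) j) y * Q2 y z') using 2
    congr
  · simp [hR]

end core

lemma ite_iff_congr {p q : Prop} [Decidable p] [Decidable q] (h : p ↔ q) (a b : ℝ) :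
    (if p then a else b) = if q then a else b := by
  split_ifs with h1 h2 <;> first | rfl | (exfalso; tauto)

section ci
variable {Ω 𝒰 𝒦 𝒱 𝒲 𝒳 𝒴 𝒵 : Type} [Fintype Ω]
    [Fintype 𝒰] [DecidableEq 𝒰]
    [Fintype 𝒦] [DecidableEq 𝒦]
    [Fintype 𝒱] [DecidableEq 𝒱]
    [Fintype 𝒲] [DecidableEq 𝒲]
    [Fintype 𝒳] [DecidableEq 𝒳]
    [Fintype 𝒴] [DecidableEq 𝒴]
    [Fintype 𝒵] [DecidableEq 𝒵]

lemma channel_CI (μ : Ω → ℝ) (n : ℕ)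
    (Q1 : 𝒳 → 𝒴 → ℝ) (Q2 : 𝒴 → 𝒵 → ℝ)
    (U : Ω → 𝒰) (K : Ω → 𝒦) (V : Ω → 𝒱) (W : Ω → 𝒲)
    (f : 𝒰 × 𝒦 → Fin n → 𝒳)
    (Y : Fin n → Ω → 𝒴) (Z : Fin n → Ω → 𝒵)
    (hch' : ∀ (ys : Fin n → 𝒴) (zs : Fin n → 𝒵) (u : 𝒰) (k : 𝒦) (v : 𝒱) (w : 𝒲),
      prob μ (fun ω => ((fun i => Y i ω), (fun i => Z i ω), U ω, K ω, V ω, W ω))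
          (ys, zs, u, k, v, w) =
        (∏ j, Q1 (f (u, k) j) (ys j) * Q2 (ys j) (zs j)) *
          prob μ (fun ω => (U ω, K ω, V ω, W ω)) (u, k, v, w))
    (i : Fin n) :
    CondIndep μ (fun ω => ((fun j => Z j ω), U ω)) (Y i)
      (fun ω => (f (U ω, K ω) i, Z i ω,
        (fun j : Fin i.val => Y ⟨j.val, j.isLt.trans i.isLt⟩ ω), K ω, W ω, V ω)) := by
  classical
  intro a b c _
  obtain ⟨zs, u⟩ := a
  obtain ⟨x, z, yp, k, w, v⟩ := c
  set pU := prob μ (fun ω => (U ω, K ω, V ω, W ω)) with hpU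
  set vY : Fin n → 𝒴 := fun j => if h : j.val < i.val then yp ⟨j.val, h⟩ else b with hvY
  have eABC := calc
    prob μ (fun ω => (((fun j => Z j ω), U ω), Y i ω,
        (f (U ω, K ω) i, Z i ω,
          (fun j : Fin i.val => Y ⟨j.val, j.isLt.trans i.isLt⟩ ω), K ω, W ω, V ω)))
        ((zs, u), b, (x, z, yp, k, w, v))
        = ∑ m : (Fin n → 𝒴) × (Fin n → 𝒵) × 𝒰 × 𝒦 × 𝒱 × 𝒲,
          (if ((m.2.1, m.2.2.1), m.1 i, (f (m.2.2.1, m.2.2.2.1) i, m.2.1 i,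
              (fun j : Fin i.val => m.1 ⟨j.val, j.isLt.trans i.isLt⟩),
              m.2.2.2.1, m.2.2.2.2.2, m.2.2.2.2.1)) = ((zs, u), b, (x, z, yp, k, w, v))
            then prob μ (fun ω => ((fun jj => Y jj ω), (fun jj => Z jj ω),
              U ω, K ω, V ω, W ω)) m else 0) :=
      prob_comp μ (fun ω => ((fun jj => Y jj ω), (fun jj => Z jj ω), U ω, K ω, V ω, W ω))
        (fun m => ((m.2.1, m.2.2.1), m.1 i, (f (m.2.2.1, m.2.2.2.1) i, m.2.1 i,
          (fun j : Fin i.val => m.1 ⟨j.val, j.isLt.trans i.isLt⟩),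
          m.2.2.2.1, m.2.2.2.2.2, m.2.2.2.2.1)))
        ((zs, u), b, (x, z, yp, k, w, v))
    _ = ∑ ys : Fin n → 𝒴, ∑ zs' : Fin n → 𝒵, ∑ u' : 𝒰, ∑ k' : 𝒦, ∑ v' : 𝒱, ∑ w' : 𝒲,
        (if ((∀ j, (j.val < i.val ∨ j = i) → ys j = vY j)
              ∧ (∀ j, (fun _ : Fin n => True) j → zs' j = zs j)
              ∧ (u' = u ∧ f (u, k) i = x ∧ zs i = z) ∧ k' = k ∧ v' = v ∧ w' = w)
          then (∏ j, Q1 (f (u', k') j) (ys j) * Q2 (ys j) (zs' j)) * pU (u', k', v', w')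
          else 0) := by
      simp only [Fintype.sum_prod_type]
      apply Finset.sum_congr rfl; intro ys _
      apply Finset.sum_congr rfl; intro zs' _
      apply Finset.sum_congr rfl; intro u' _
      apply Finset.sum_congr rfl; intro k' _
      apply Finset.sum_congr rfl; intro v' _
      apply Finset.sum_congr rfl; intro w' _
      rw [hch']
      apply ite_iff_congr
      simp only [Prod.mk.injEq]
      constructor
      · rintro ⟨⟨hzs, hu⟩, hyi, hfx, hzi, hpre, hk, hw, hv⟩
        refine ⟨?_, fun j _ => congrFun hzs j, ⟨hu, ?_, ?_⟩, hk, hv, hw⟩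
        · intro j hj
          rcases hj with hj | hj
          · have hp := congrFun hpre ⟨j.val, hj⟩
            simp only [hvY]
            rw [dif_pos hj]
            rw [Fin.eta] at hp
            exact hp
          · subst hj
            simp only [hvY]
            rw [dif_neg (lt_irrefl j.val)]
            exact hyi
        · rw [hu, hk] at hfx; exact hfx
        · exact (congrFun hzs i).symm.trans hzi
      · rintro ⟨hY, hZ, ⟨hu, hfx, hzi⟩, hk, hv, hw⟩
        subst hu; subst hk; subst hv; subst hw
        have hzs : zs' = zs := funext (fun j => hZ j trivial)
        refine ⟨⟨hzs, rfl⟩, ?_, hfx, (congrFun hzs i).trans ?_, ?_, rfl, rfl, rfl⟩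
        · have hb := hY i (Or.inr rfl)
          simp only [hvY] at hb
          rw [dif_neg (lt_irrefl i.val)] at hb
          exact hb
        · exact hzi
        · funext jj
          have hyj := hY ⟨jj.val, lt_of_lt_of_le jj.isLt (le_of_lt i.isLt)⟩
            (Or.inl jj.isLt)
          simp only [hvY] at hyj
          rw [dif_pos jj.isLt] at hyj
          rw [hyj]
    _ = _ := core_sum Q1 Q2 f pU k v w (fun j => j.val < i.val ∨ j = i) vY
        (fun _ => True) zs (fun u' => u' = u ∧ f (u, k) i = x ∧ zs i = z)
  have eAC := calc
    prob μ (fun ω => (((fun j => Z j ω), U ω),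
        (f (U ω, K ω) i, Z i ω,
          (fun j : Fin i.val => Y ⟨j.val, j.isLt.trans i.isLt⟩ ω), K ω, W ω, V ω)))
        ((zs, u), (x, z, yp, k, w, v))
        = ∑ m : (Fin n → 𝒴) × (Fin n → 𝒵) × 𝒰 × 𝒦 × 𝒱 × 𝒲,
          (if ((m.2.1, m.2.2.1), (f (m.2.2.1, m.2.2.2.1) i, m.2.1 i,
              (fun j : Fin i.val => m.1 ⟨j.val, j.isLt.trans i.isLt⟩),
              m.2.2.2.1, m.2.2.2.2.2, m.2.2.2.2.1)) = ((zs, u), (x, z, yp, k, w, v))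
            then prob μ (fun ω => ((fun jj => Y jj ω), (fun jj => Z jj ω),
              U ω, K ω, V ω, W ω)) m else 0) :=
      prob_comp μ (fun ω => ((fun jj => Y jj ω), (fun jj => Z jj ω), U ω, K ω, V ω, W ω))
        (fun m => ((m.2.1, m.2.2.1), (f (m.2.2.1, m.2.2.2.1) i, m.2.1 i,
          (fun j : Fin i.val => m.1 ⟨j.val, j.isLt.trans i.isLt⟩),
          m.2.2.2.1, m.2.2.2.2.2, m.2.2.2.2.1)))
        ((zs, u), (x, z, yp, k, w, v))
    _ = ∑ ys : Fin n → 𝒴, ∑ zs' : Fin n → 𝒵, ∑ u' : 𝒰, ∑ k' : 𝒦, ∑ v' : 𝒱, ∑ w' : 𝒲,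
        (if ((∀ j, j.val < i.val → ys j = vY j)
              ∧ (∀ j, (fun _ : Fin n => True) j → zs' j = zs j)
              ∧ (u' = u ∧ f (u, k) i = x ∧ zs i = z) ∧ k' = k ∧ v' = v ∧ w' = w)
          then (∏ j, Q1 (f (u', k') j) (ys j) * Q2 (ys j) (zs' j)) * pU (u', k', v', w')
          else 0) := by
      simp only [Fintype.sum_prod_type]
      apply Finset.sum_congr rfl; intro ys _
      apply Finset.sum_congr rfl; intro zs' _
      apply Finset.sum_congr rfl; intro u' _
      apply Finset.sum_congr rfl; intro k' _
      apply Finset.sum_congr rfl; intro v' _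
      apply Finset.sum_congr rfl; intro w' _
      rw [hch']
      apply ite_iff_congr
      simp only [Prod.mk.injEq]
      constructor
      · rintro ⟨⟨hzs, hu⟩, hfx, hzi, hpre, hk, hw, hv⟩
        refine ⟨?_, fun j _ => congrFun hzs j, ⟨hu, ?_, ?_⟩, hk, hv, hw⟩
        · intro j hj
          have hp := congrFun hpre ⟨j.val, hj⟩
          simp only [hvY]
          rw [dif_pos hj]
          rw [Fin.eta] at hp
          exact hp
        · rw [hu, hk] at hfx; exact hfx
        · exact (congrFun hzs i).symm.trans hzi
      · rintro ⟨hY, hZ, ⟨hu, hfx, hzi⟩, hk, hv, hw⟩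
        subst hu; subst hk; subst hv; subst hw
        have hzs : zs' = zs := funext (fun j => hZ j trivial)
        refine ⟨⟨hzs, rfl⟩, hfx, (congrFun hzs i).trans hzi, ?_, rfl, rfl, rfl⟩
        funext jj
        have hyj := hY ⟨jj.val, lt_of_lt_of_le jj.isLt (le_of_lt i.isLt)⟩ jj.isLt
        simp only [hvY] at hyj
        rw [dif_pos jj.isLt] at hyj
        rw [hyj]
    _ = _ := core_sum Q1 Q2 f pU k v w (fun j => j.val < i.val) vY
        (fun _ => True) zs (fun u' => u' = u ∧ f (u, k) i = x ∧ zs i = z)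
  have eBC := calc
    prob μ (fun ω => (Y i ω,
        (f (U ω, K ω) i, Z i ω,
          (fun j : Fin i.val => Y ⟨j.val, j.isLt.trans i.isLt⟩ ω), K ω, W ω, V ω)))
        (b, (x, z, yp, k, w, v))
        = ∑ m : (Fin n → 𝒴) × (Fin n → 𝒵) × 𝒰 × 𝒦 × 𝒱 × 𝒲,
          (if (m.1 i, (f (m.2.2.1, m.2.2.2.1) i, m.2.1 i,
              (fun j : Fin i.val => m.1 ⟨j.val, j.isLt.trans i.isLt⟩),
              m.2.2.2.1, m.2.2.2.2.2, m.2.2.2.2.1)) = (b, (x, z, yp, k, w, v))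
            then prob μ (fun ω => ((fun jj => Y jj ω), (fun jj => Z jj ω),
              U ω, K ω, V ω, W ω)) m else 0) :=
      prob_comp μ (fun ω => ((fun jj => Y jj ω), (fun jj => Z jj ω), U ω, K ω, V ω, W ω))
        (fun m => (m.1 i, (f (m.2.2.1, m.2.2.2.1) i, m.2.1 i,
          (fun j : Fin i.val => m.1 ⟨j.val, j.isLt.trans i.isLt⟩),
          m.2.2.2.1, m.2.2.2.2.2, m.2.2.2.2.1)))
        (b, (x, z, yp, k, w, v))
    _ = ∑ ys : Fin n → 𝒴, ∑ zs' : Fin n → 𝒵, ∑ u' : 𝒰, ∑ k' : 𝒦, ∑ v' : 𝒱, ∑ w' : 𝒲,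
        (if ((∀ j, (j.val < i.val ∨ j = i) → ys j = vY j)
              ∧ (∀ j : Fin n, j = i → zs' j = (fun _ : Fin n => z) j)
              ∧ (f (u', k) i = x) ∧ k' = k ∧ v' = v ∧ w' = w)
          then (∏ j, Q1 (f (u', k') j) (ys j) * Q2 (ys j) (zs' j)) * pU (u', k', v', w')
          else 0) := by
      simp only [Fintype.sum_prod_type]
      apply Finset.sum_congr rfl; intro ys _
      apply Finset.sum_congr rfl; intro zs' _
      apply Finset.sum_congr rfl; intro u' _
      apply Finset.sum_congr rfl; intro k' _
      apply Finset.sum_congr rfl; intro v' _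
      apply Finset.sum_congr rfl; intro w' _
      rw [hch']
      apply ite_iff_congr
      simp only [Prod.mk.injEq]
      constructor
      · rintro ⟨hyi, hfx, hzi, hpre, hk, hw, hv⟩
        refine ⟨?_, ?_, ?_, hk, hv, hw⟩
        · intro j hj
          rcases hj with hj | hj
          · have hp := congrFun hpre ⟨j.val, hj⟩
            simp only [hvY]
            rw [dif_pos hj]
            rw [Fin.eta] at hp
            exact hp
          · subst hj
            simp only [hvY]
            rw [dif_neg (lt_irrefl j.val)]
            exact hyi
        · intro j hj; subst hj; exact hzi
        · rw [hk] at hfx; exact hfx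
      · rintro ⟨hY, hZ, hfx, hk, hv, hw⟩
        subst hk; subst hv; subst hw
        refine ⟨?_, hfx, hZ i rfl, ?_, rfl, rfl, rfl⟩
        · have hb := hY i (Or.inr rfl)
          simp only [hvY] at hb
          rw [dif_neg (lt_irrefl i.val)] at hb
          exact hb
        · funext jj
          have hyj := hY ⟨jj.val, lt_of_lt_of_le jj.isLt (le_of_lt i.isLt)⟩
            (Or.inl jj.isLt)
          simp only [hvY] at hyj
          rw [dif_pos jj.isLt] at hyj
          rw [hyj]
    _ = _ := core_sum Q1 Q2 f pU k v w (fun j => j.val < i.val ∨ j = i) vY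
        (fun j => j = i) (fun _ => z) (fun u' => f (u', k) i = x)
  have eC := calc
    prob μ (fun ω => (f (U ω, K ω) i, Z i ω,
          (fun j : Fin i.val => Y ⟨j.val, j.isLt.trans i.isLt⟩ ω), K ω, W ω, V ω))
        (x, z, yp, k, w, v)
        = ∑ m : (Fin n → 𝒴) × (Fin n → 𝒵) × 𝒰 × 𝒦 × 𝒱 × 𝒲,
          (if (f (m.2.2.1, m.2.2.2.1) i, m.2.1 i,
              (fun j : Fin i.val => m.1 ⟨j.val, j.isLt.trans i.isLt⟩),
              m.2.2.2.1, m.2.2.2.2.2, m.2.2.2.2.1) = (x, z, yp, k, w, v)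
            then prob μ (fun ω => ((fun jj => Y jj ω), (fun jj => Z jj ω),
              U ω, K ω, V ω, W ω)) m else 0) :=
      prob_comp μ (fun ω => ((fun jj => Y jj ω), (fun jj => Z jj ω), U ω, K ω, V ω, W ω))
        (fun m => (f (m.2.2.1, m.2.2.2.1) i, m.2.1 i,
          (fun j : Fin i.val => m.1 ⟨j.val, j.isLt.trans i.isLt⟩),
          m.2.2.2.1, m.2.2.2.2.2, m.2.2.2.2.1))
        (x, z, yp, k, w, v)
    _ = ∑ ys : Fin n → 𝒴, ∑ zs' : Fin n → 𝒵, ∑ u' : 𝒰, ∑ k' : 𝒦, ∑ v' : 𝒱, ∑ w' : 𝒲,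
        (if ((∀ j, j.val < i.val → ys j = vY j)
              ∧ (∀ j : Fin n, j = i → zs' j = (fun _ : Fin n => z) j)
              ∧ (f (u', k) i = x) ∧ k' = k ∧ v' = v ∧ w' = w)
          then (∏ j, Q1 (f (u', k') j) (ys j) * Q2 (ys j) (zs' j)) * pU (u', k', v', w')
          else 0) := by
      simp only [Fintype.sum_prod_type]
      apply Finset.sum_congr rfl; intro ys _
      apply Finset.sum_congr rfl; intro zs' _
      apply Finset.sum_congr rfl; intro u' _
      apply Finset.sum_congr rfl; intro k' _
      apply Finset.sum_congr rfl; intro v' _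
      apply Finset.sum_congr rfl; intro w' _
      rw [hch']
      apply ite_iff_congr
      simp only [Prod.mk.injEq]
      constructor
      · rintro ⟨hfx, hzi, hpre, hk, hw, hv⟩
        refine ⟨?_, ?_, ?_, hk, hv, hw⟩
        · intro j hj
          have hp := congrFun hpre ⟨j.val, hj⟩
          simp only [hvY]
          rw [dif_pos hj]
          rw [Fin.eta] at hp
          exact hp
        · intro j hj; subst hj; exact hzi
        · rw [hk] at hfx; exact hfx
      · rintro ⟨hY, hZ, hfx, hk, hv, hw⟩
        subst hk; subst hv; subst hw
        refine ⟨hfx, hZ i rfl, ?_, rfl, rfl, rfl⟩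
        funext jj
        have hyj := hY ⟨jj.val, lt_of_lt_of_le jj.isLt (le_of_lt i.isLt)⟩ jj.isLt
        simp only [hvY] at hyj
        rw [dif_pos jj.isLt] at hyj
        rw [hyj]
    _ = _ := core_sum Q1 Q2 f pU k v w (fun j => j.val < i.val) vY
        (fun j => j = i) (fun _ => z) (fun u' => f (u', k) i = x)
  rw [eABC, eAC, eBC, eC]
  have cABC : (∑ u' : 𝒰, (if (u' = u ∧ f (u, k) i = x ∧ zs i = z)
        then (∏ j, (if (j.val < i.val ∨ j = i)
          then (if True then Q1 (f (u', k) j) (vY j) * Q2 (vY j) (zs j)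
                else ∑ z', Q1 (f (u', k) j) (vY j) * Q2 (vY j) z')
          else ∑ y, (if True then Q1 (f (u', k) j) y * Q2 y (zs j)
                else ∑ z', Q1 (f (u', k) j) y * Q2 y z'))) * pU (u', k, v, w)
        else 0))
      = (if (u = u ∧ f (u, k) i = x ∧ zs i = z)
        then (∏ j, (if (j.val < i.val ∨ j = i)
          then (if True then Q1 (f (u, k) j) (vY j) * Q2 (vY j) (zs j)
                else ∑ z', Q1 (f (u, k) j) (vY j) * Q2 (vY j) z')
          else ∑ y, (if True then Q1 (f (u, k) j) y * Q2 y (zs j)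
                else ∑ z', Q1 (f (u, k) j) y * Q2 y z'))) * pU (u, k, v, w)
        else 0) :=
    Finset.sum_eq_single u (fun u'' _ hne => if_neg (fun hc => hne hc.1))
      (fun h => absurd (Finset.mem_univ u) h)
  have cAC : (∑ u' : 𝒰, (if (u' = u ∧ f (u, k) i = x ∧ zs i = z)
        then (∏ j, (if j.val < i.val
          then (if True then Q1 (f (u', k) j) (vY j) * Q2 (vY j) (zs j)
                else ∑ z', Q1 (f (u', k) j) (vY j) * Q2 (vY j) z')
          else ∑ y, (if True then Q1 (f (u', k) j) y * Q2 y (zs j)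
                else ∑ z', Q1 (f (u', k) j) y * Q2 y z'))) * pU (u', k, v, w)
        else 0))
      = (if (u = u ∧ f (u, k) i = x ∧ zs i = z)
        then (∏ j, (if j.val < i.val
          then (if True then Q1 (f (u, k) j) (vY j) * Q2 (vY j) (zs j)
                else ∑ z', Q1 (f (u, k) j) (vY j) * Q2 (vY j) z')
          else ∑ y, (if True then Q1 (f (u, k) j) y * Q2 y (zs j)
                else ∑ z', Q1 (f (u, k) j) y * Q2 y z'))) * pU (u, k, v, w)
        else 0) :=
    Finset.sum_eq_single u (fun u'' _ hne => if_neg (fun hc => hne hc.1))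
      (fun h => absurd (Finset.mem_univ u) h)
  rw [cABC, cAC]
  by_cases hχ : f (u, k) i = x ∧ zs i = z
  · obtain ⟨hfx, hzi⟩ := hχ
    rw [if_pos ⟨rfl, hfx, hzi⟩, if_pos ⟨rfl, hfx, hzi⟩]
    rw [Finset.mul_sum, Finset.mul_sum]
    apply Finset.sum_congr rfl
    intro u' _
    by_cases hR : f (u', k) i = x
    · rw [if_pos hR, if_pos hR]
      have hkey : (∏ j, (if (j.val < i.val ∨ j = i)
            then (if True then Q1 (f (u, k) j) (vY j) * Q2 (vY j) (zs j)
                  else ∑ z', Q1 (f (u, k) j) (vY j) * Q2 (vY j) z')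
            else ∑ y, (if True then Q1 (f (u, k) j) y * Q2 y (zs j)
                  else ∑ z', Q1 (f (u, k) j) y * Q2 y z')))
          * (∏ j, (if j.val < i.val
            then (if j = i then Q1 (f (u', k) j) (vY j) * Q2 (vY j) ((fun _ : Fin n => z) j)
                  else ∑ z', Q1 (f (u', k) j) (vY j) * Q2 (vY j) z')
            else ∑ y, (if j = i then Q1 (f (u', k) j) y * Q2 y ((fun _ : Fin n => z) j)
                  else ∑ z', Q1 (f (u', k) j) y * Q2 y z')))
          = (∏ j, (if j.val < i.val
            then (if True then Q1 (f (u, k) j) (vY j) * Q2 (vY j) (zs j)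
                  else ∑ z', Q1 (f (u, k) j) (vY j) * Q2 (vY j) z')
            else ∑ y, (if True then Q1 (f (u, k) j) y * Q2 y (zs j)
                  else ∑ z', Q1 (f (u, k) j) y * Q2 y z')))
          * (∏ j, (if (j.val < i.val ∨ j = i)
            then (if j = i then Q1 (f (u', k) j) (vY j) * Q2 (vY j) ((fun _ : Fin n => z) j)
                  else ∑ z', Q1 (f (u', k) j) (vY j) * Q2 (vY j) z')
            else ∑ y, (if j = i then Q1 (f (u', k) j) y * Q2 y ((fun _ : Fin n => z) j)
                  else ∑ z', Q1 (f (u', k) j) y * Q2 y z'))) := by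
        rw [← Finset.prod_mul_distrib, ← Finset.prod_mul_distrib]
        apply Finset.prod_congr rfl
        intro j _
        simp only [if_true]
        by_cases h1 : j.val < i.val
        · have hne : j ≠ i := fun hh => absurd h1 (by rw [hh]; exact lt_irrefl _)
          simp [h1, hne]
        · by_cases h2 : j = i
          · subst h2
            simp only [h1, or_true, if_true, if_false, ite_true, ite_false,
              eq_self_iff_true, if_pos rfl, or_false]
            simp only [hvY]
            rw [dif_neg h1]
            rw [hfx, hR, hzi]
            ring
          · simp [h1, h2]
      linear_combination (pU (u, k, v, w) * pU (u', k, v, w)) * hkey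
    · rw [if_neg hR, if_neg hR, mul_zero, mul_zero]
  · rw [if_neg (fun hc => hχ hc.2), if_neg (fun hc => hχ hc.2), zero_mul, zero_mul]

lemma condMI_constB {Ω α β γ : Type} [Fintype Ω] [Fintype α] [DecidableEq α]
    [Fintype β] [DecidableEq β] [Fintype γ] [DecidableEq γ]
    (μ : Ω → ℝ) (A : Ω → α) (B : Ω → β) (C : Ω → γ)
    (hB : ∀ ω ω', B ω = B ω') : condMI μ A B C = 0 := by
  have e1 : entH μ (fun ω => (B ω, C ω)) = entH μ C :=
    entH_congr μ (fun ω ω' => by simp [Prod.ext_iff, hB ω ω'])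
  have e2 : entH μ (fun ω => (A ω, B ω, C ω)) = entH μ (fun ω => (A ω, C ω)) :=
    entH_congr μ (fun ω ω' => by simp [Prod.ext_iff, hB ω ω'])
  simp only [condMI, e1, e2]; ring

/-- Chain (18) of the converse proof: for a degraded memoryless broadcast channel
`X^n → Y^n → Z^n` fed by `X^n = f(U,K)`,
`I(U;(K,Y^n)|(W,V)) − I(U;(K,Z^n)|(W,V)) ≤ ∑ i, I(X_i;Y_i | (Z_i, Y^{i−1}, K, W, V))`. -/
theorem stmt6 {Ω 𝒰 𝒦 𝒱 𝒲 𝒳 𝒴 𝒵 : Type} [Fintype Ω]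
    [Fintype 𝒰] [DecidableEq 𝒰] [Nonempty 𝒰]
    [Fintype 𝒦] [DecidableEq 𝒦] [Nonempty 𝒦]
    [Fintype 𝒱] [DecidableEq 𝒱] [Nonempty 𝒱]
    [Fintype 𝒲] [DecidableEq 𝒲] [Nonempty 𝒲]
    [Fintype 𝒳] [DecidableEq 𝒳] [Nonempty 𝒳]
    [Fintype 𝒴] [DecidableEq 𝒴] [Nonempty 𝒴]
    [Fintype 𝒵] [DecidableEq 𝒵] [Nonempty 𝒵]
    (μ : Ω → ℝ) (hμ0 : ∀ ω, 0 ≤ μ ω) (hμ1 : ∑ ω, μ ω = 1)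
    (n : ℕ) (hn : 0 < n)
    (Q1 : 𝒳 → 𝒴 → ℝ) (hQ10 : ∀ x y, 0 ≤ Q1 x y) (hQ11 : ∀ x, ∑ y, Q1 x y = 1)
    (Q2 : 𝒴 → 𝒵 → ℝ) (hQ20 : ∀ y z, 0 ≤ Q2 y z) (hQ21 : ∀ y, ∑ z, Q2 y z = 1)
    (U : Ω → 𝒰) (K : Ω → 𝒦) (V : Ω → 𝒱) (W : Ω → 𝒲)
    (f : 𝒰 × 𝒦 → Fin n → 𝒳)
    (Y : Fin n → Ω → 𝒴) (Z : Fin n → Ω → 𝒵)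
    (hch : ∀ (u : 𝒰) (k : 𝒦) (v : 𝒱) (w : 𝒲) (ys : Fin n → 𝒴) (zs : Fin n → 𝒵),
      0 < prob μ (fun ω => (U ω, K ω, V ω, W ω)) (u, k, v, w) →
      prob μ (fun ω => ((fun i => Y i ω), (fun i => Z i ω), U ω, K ω, V ω, W ω))
          (ys, zs, u, k, v, w) =
        (∏ i, Q1 (f (u, k) i) (ys i) * Q2 (ys i) (zs i)) *
          prob μ (fun ω => (U ω, K ω, V ω, W ω)) (u, k, v, w)) :
    condMI μ U (fun ω => (K ω, fun i => Y i ω)) (fun ω => (W ω, V ω))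
      - condMI μ U (fun ω => (K ω, fun i => Z i ω)) (fun ω => (W ω, V ω))
      ≤ ∑ i : Fin n, condMI μ (fun ω => f (U ω, K ω) i) (Y i)
          (fun ω => (Z i ω, (fun j : Fin i.val => Y ⟨j.val, j.isLt.trans i.isLt⟩ ω),
            K ω, W ω, V ω)) := by
  classical
  -- the channel law holds unconditionally
  have hch' : ∀ (ys : Fin n → 𝒴) (zs : Fin n → 𝒵) (u : 𝒰) (k : 𝒦) (v : 𝒱) (w : 𝒲),
      prob μ (fun ω => ((fun i => Y i ω), (fun i => Z i ω), U ω, K ω, V ω, W ω))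
          (ys, zs, u, k, v, w) =
        (∏ j, Q1 (f (u, k) j) (ys j) * Q2 (ys j) (zs j)) *
          prob μ (fun ω => (U ω, K ω, V ω, W ω)) (u, k, v, w) := by
    intro ys zs u k v w
    by_cases hp : 0 < prob μ (fun ω => (U ω, K ω, V ω, W ω)) (u, k, v, w)
    · exact hch u k v w ys zs hp
    · have h0 : prob μ (fun ω => (U ω, K ω, V ω, W ω)) (u, k, v, w) = 0 :=
        le_antisymm (not_lt.mp hp) (prob_nonneg μ hμ0 _ _)
      have hle : prob μ (fun ω => ((fun i => Y i ω), (fun i => Z i ω),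
          U ω, K ω, V ω, W ω)) (ys, zs, u, k, v, w) ≤ 0 := by
        rw [← h0]
        refine prob_le_of_imp μ hμ0 _ _ _ _ (fun ω h => ?_)
        simp only [Prod.mk.injEq] at h
        simp [h.2.2.1, h.2.2.2.1, h.2.2.2.2.1, h.2.2.2.2.2]
      have hz : prob μ (fun ω => ((fun i => Y i ω), (fun i => Z i ω),
          U ω, K ω, V ω, W ω)) (ys, zs, u, k, v, w) = 0 :=
        le_antisymm hle (prob_nonneg μ hμ0 _ _)
      rw [hz, h0, mul_zero]
  -- Step 1: peel off K from the conditioning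
  have step1Y : condMI μ U (fun ω => (K ω, fun i => Y i ω)) (fun ω => (W ω, V ω))
      = condMI μ U K (fun ω => (W ω, V ω))
        + condMI μ U (fun ω => (fun i => Y i ω)) (fun ω => (K ω, W ω, V ω)) := by
    rw [condMI_symm μ U (fun ω => (K ω, fun i => Y i ω)) (fun ω => (W ω, V ω)),
      condMI_chain μ K (fun ω => (fun i => Y i ω)) U (fun ω => (W ω, V ω)),
      condMI_symm μ K U (fun ω => (W ω, V ω)),
      condMI_symm μ (fun ω => (fun i => Y i ω)) U (fun ω => (K ω, W ω, V ω))]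
  have step1Z : condMI μ U (fun ω => (K ω, fun i => Z i ω)) (fun ω => (W ω, V ω))
      = condMI μ U K (fun ω => (W ω, V ω))
        + condMI μ U (fun ω => (fun i => Z i ω)) (fun ω => (K ω, W ω, V ω)) := by
    rw [condMI_symm μ U (fun ω => (K ω, fun i => Z i ω)) (fun ω => (W ω, V ω)),
      condMI_chain μ K (fun ω => (fun i => Z i ω)) U (fun ω => (W ω, V ω)),
      condMI_symm μ K U (fun ω => (W ω, V ω)),
      condMI_symm μ (fun ω => (fun i => Z i ω)) U (fun ω => (K ω, W ω, V ω))]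
  -- Step 2: reduce to I(U; Yn | Zn, K, W, V)
  have chainZY : condMI μ U (fun ω => ((fun i => Z i ω), (fun i => Y i ω)))
        (fun ω => (K ω, W ω, V ω))
      = condMI μ U (fun ω => (fun i => Z i ω)) (fun ω => (K ω, W ω, V ω))
        + condMI μ U (fun ω => (fun i => Y i ω))
            (fun ω => ((fun i => Z i ω), K ω, W ω, V ω)) := by
    rw [condMI_symm μ U (fun ω => ((fun i => Z i ω), (fun i => Y i ω)))
        (fun ω => (K ω, W ω, V ω)),
      condMI_chain μ (fun ω => (fun i => Z i ω)) (fun ω => (fun i => Y i ω)) U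
        (fun ω => (K ω, W ω, V ω)),
      condMI_symm μ (fun ω => (fun i => Z i ω)) U (fun ω => (K ω, W ω, V ω)),
      condMI_symm μ (fun ω => (fun i => Y i ω)) U
        (fun ω => ((fun i => Z i ω), K ω, W ω, V ω))]
  have chainYZ : condMI μ U (fun ω => ((fun i => Z i ω), (fun i => Y i ω)))
        (fun ω => (K ω, W ω, V ω))
      = condMI μ U (fun ω => (fun i => Y i ω)) (fun ω => (K ω, W ω, V ω))
        + condMI μ U (fun ω => (fun i => Z i ω))
            (fun ω => ((fun i => Y i ω), K ω, W ω, V ω)) := by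
    have swap : condMI μ U (fun ω => ((fun i => Z i ω), (fun i => Y i ω)))
          (fun ω => (K ω, W ω, V ω))
        = condMI μ U (fun ω => ((fun i => Y i ω), (fun i => Z i ω)))
            (fun ω => (K ω, W ω, V ω)) :=
      condMI_congr μ (fun ω ω' => Iff.rfl)
        (fun ω ω' => by simp only [Prod.ext_iff]; tauto)
        (fun ω ω' => Iff.rfl)
    rw [swap,
      condMI_symm μ U (fun ω => ((fun i => Y i ω), (fun i => Z i ω)))
        (fun ω => (K ω, W ω, V ω)),
      condMI_chain μ (fun ω => (fun i => Y i ω)) (fun ω => (fun i => Z i ω)) U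
        (fun ω => (K ω, W ω, V ω)),
      condMI_symm μ (fun ω => (fun i => Y i ω)) U (fun ω => (K ω, W ω, V ω)),
      condMI_symm μ (fun ω => (fun i => Z i ω)) U
        (fun ω => ((fun i => Y i ω), K ω, W ω, V ω))]
  have nn1 : 0 ≤ condMI μ U (fun ω => (fun i => Z i ω))
      (fun ω => ((fun i => Y i ω), K ω, W ω, V ω)) :=
    condMI_nonneg μ hμ0 hμ1 _ _ _
  -- per-index bound
  have hper : ∀ i : Fin n,
      condMI μ U (Y i) (fun ω =>
        ((fun j : Fin i.val => Y ⟨j.val, j.isLt.trans i.isLt⟩ ω),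
          (fun iz => Z iz ω), K ω, W ω, V ω))
      ≤ condMI μ (fun ω => f (U ω, K ω) i) (Y i)
          (fun ω => (Z i ω, (fun j : Fin i.val => Y ⟨j.val, j.isLt.trans i.isLt⟩ ω),
            K ω, W ω, V ω)) := by
    intro i
    have hC : ∀ ω ω',
        ((fun j : Fin i.val => Y ⟨j.val, j.isLt.trans i.isLt⟩ ω),
          (fun iz => Z iz ω), K ω, W ω, V ω)
        = ((fun j : Fin i.val => Y ⟨j.val, j.isLt.trans i.isLt⟩ ω'),
          (fun iz => Z iz ω'), K ω', W ω', V ω')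
        ↔ ((fun iz => Z iz ω), Z i ω,
            (fun j : Fin i.val => Y ⟨j.val, j.isLt.trans i.isLt⟩ ω), K ω, W ω, V ω)
          = ((fun iz => Z iz ω'), Z i ω',
            (fun j : Fin i.val => Y ⟨j.val, j.isLt.trans i.isLt⟩ ω'), K ω', W ω', V ω') := by
      intro ω ω'
      simp only [Prod.mk.injEq]
      constructor
      · rintro ⟨h1, h2, h3, h4, h5⟩
        exact ⟨h2, congrFun h2 i, h1, h3, h4, h5⟩
      · rintro ⟨h1, h2, h3, h4, h5, h6⟩
        exact ⟨h3, h1, h4, h5, h6⟩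
    have ea : condMI μ U (Y i) (fun ω =>
          ((fun j : Fin i.val => Y ⟨j.val, j.isLt.trans i.isLt⟩ ω),
            (fun iz => Z iz ω), K ω, W ω, V ω))
        = condMI μ U (Y i) (fun ω =>
          ((fun iz => Z iz ω), Z i ω,
            (fun j : Fin i.val => Y ⟨j.val, j.isLt.trans i.isLt⟩ ω), K ω, W ω, V ω)) :=
      condMI_congr μ (fun ω ω' => and_congr Iff.rfl (hC ω ω'))
        (fun ω ω' => and_congr Iff.rfl (hC ω ω')) hC
    have eb := condMI_chain μ (fun ω => (fun iz => Z iz ω)) U (Y i)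
      (fun ω => (Z i ω, (fun j : Fin i.val => Y ⟨j.val, j.isLt.trans i.isLt⟩ ω),
        K ω, W ω, V ω))
    have nb : 0 ≤ condMI μ (fun ω => (fun iz => Z iz ω)) (Y i)
        (fun ω => (Z i ω, (fun j : Fin i.val => Y ⟨j.val, j.isLt.trans i.isLt⟩ ω),
          K ω, W ω, V ω)) :=
      condMI_nonneg μ hμ0 hμ1 _ _ _
    have hACX : ∀ ω ω',
        (((fun iz => Z iz ω), U ω) = ((fun iz => Z iz ω'), U ω')
          ∧ (Z i ω, (fun j : Fin i.val => Y ⟨j.val, j.isLt.trans i.isLt⟩ ω),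
              K ω, W ω, V ω)
            = (Z i ω', (fun j : Fin i.val => Y ⟨j.val, j.isLt.trans i.isLt⟩ ω'),
              K ω', W ω', V ω'))
        ↔ ((f (U ω, K ω) i, ((fun iz => Z iz ω), U ω))
            = (f (U ω', K ω') i, ((fun iz => Z iz ω'), U ω'))
          ∧ (Z i ω, (fun j : Fin i.val => Y ⟨j.val, j.isLt.trans i.isLt⟩ ω),
              K ω, W ω, V ω)
            = (Z i ω', (fun j : Fin i.val => Y ⟨j.val, j.isLt.trans i.isLt⟩ ω'),
              K ω', W ω', V ω')) := by
      intro ω ω'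
      simp only [Prod.mk.injEq]
      constructor
      · rintro ⟨⟨h1, h2⟩, h3, h4, h5, h6, h7⟩
        refine ⟨⟨?_, h1, h2⟩, h3, h4, h5, h6, h7⟩
        rw [h2, h5]
      · rintro ⟨⟨h0, h1, h2⟩, h3⟩
        exact ⟨⟨h1, h2⟩, h3⟩
    have ec : condMI μ (fun ω => ((fun iz => Z iz ω), U ω)) (Y i)
          (fun ω => (Z i ω, (fun j : Fin i.val => Y ⟨j.val, j.isLt.trans i.isLt⟩ ω),
            K ω, W ω, V ω))
        = condMI μ (fun ω => (f (U ω, K ω) i, ((fun iz => Z iz ω), U ω))) (Y i)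
          (fun ω => (Z i ω, (fun j : Fin i.val => Y ⟨j.val, j.isLt.trans i.isLt⟩ ω),
            K ω, W ω, V ω)) :=
      condMI_congr μ hACX (fun ω ω' => Iff.rfl) (fun ω ω' => Iff.rfl)
    have ed := condMI_chain μ (fun ω => f (U ω, K ω) i)
      (fun ω => ((fun iz => Z iz ω), U ω)) (Y i)
      (fun ω => (Z i ω, (fun j : Fin i.val => Y ⟨j.val, j.isLt.trans i.isLt⟩ ω),
        K ω, W ω, V ω))
    have ez : condMI μ (fun ω => ((fun iz => Z iz ω), U ω)) (Y i)
        (fun ω => (f (U ω, K ω) i,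
          (Z i ω, (fun j : Fin i.val => Y ⟨j.val, j.isLt.trans i.isLt⟩ ω),
            K ω, W ω, V ω))) = 0 :=
      condMI_zero μ hμ0 (channel_CI μ n Q1 Q2 U K V W f Y Z hch' i)
    rw [ea]
    linarith [eb, nb, ec, ed, ez]
  -- summand as a function of ℕ
  set g : ℕ → ℝ := fun m => if h : m < n then
      condMI μ (fun ω => f (U ω, K ω) (⟨m, h⟩ : Fin n)) (Y ⟨m, h⟩)
        (fun ω => (Z ⟨m, h⟩ ω, (fun j : Fin m => Y ⟨j.val, lt_trans j.isLt h⟩ ω),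
          K ω, W ω, V ω))
    else 0 with hg
  -- induction on prefixes
  have main : ∀ m : ℕ, ∀ hm : m ≤ n,
      condMI μ U (fun ω => (fun j : Fin m => Y ⟨j.val, lt_of_lt_of_le j.isLt hm⟩ ω))
        (fun ω => ((fun iz => Z iz ω), K ω, W ω, V ω))
      ≤ ∑ jm ∈ Finset.range m, g jm := by
    intro m
    induction m with
    | zero =>
      intro hm
      rw [Finset.range_zero, Finset.sum_empty]
      exact le_of_eq (condMI_constB μ _ _ _
        (fun ω ω' => funext (fun j => absurd j.isLt (Nat.not_lt_zero _))))
    | succ m ih =>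
      intro hm
      have hmn : m < n := Nat.lt_of_lt_of_le (Nat.lt_succ_self m) hm
      have hm' : m ≤ n := le_of_lt hmn
      have hiffB : ∀ ω ω',
          (fun j : Fin (m+1) => Y ⟨j.val, lt_of_lt_of_le j.isLt hm⟩ ω)
            = (fun j : Fin (m+1) => Y ⟨j.val, lt_of_lt_of_le j.isLt hm⟩ ω')
          ↔ ((fun j : Fin m => Y ⟨j.val, lt_of_lt_of_le j.isLt hm'⟩ ω, Y ⟨m, hmn⟩ ω)
            = ((fun j : Fin m => Y ⟨j.val, lt_of_lt_of_le j.isLt hm'⟩ ω', Y ⟨m, hmn⟩ ω'))) := by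
        intro ω ω'
        simp only [Prod.mk.injEq]
        constructor
        · intro h
          constructor
          · funext j
            exact congrFun h ⟨j.val, Nat.lt_succ_of_lt j.isLt⟩
          · exact congrFun h ⟨m, Nat.lt_succ_self m⟩
        · rintro ⟨h1, h2⟩
          funext j
          rcases Nat.lt_succ_iff_lt_or_eq.mp j.isLt with hlt | heq
          · exact congrFun h1 ⟨j.val, hlt⟩
          · have hij : (⟨j.val, lt_of_lt_of_le j.isLt hm⟩ : Fin n) = ⟨m, hmn⟩ :=
              Fin.ext heq
            rw [hij]
            exact h2
      have esplit : condMI μ U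
            (fun ω => (fun j : Fin (m+1) => Y ⟨j.val, lt_of_lt_of_le j.isLt hm⟩ ω))
            (fun ω => ((fun iz => Z iz ω), K ω, W ω, V ω))
          = condMI μ U
            (fun ω => ((fun j : Fin m => Y ⟨j.val, lt_of_lt_of_le j.isLt hm'⟩ ω),
              Y ⟨m, hmn⟩ ω))
            (fun ω => ((fun iz => Z iz ω), K ω, W ω, V ω)) :=
        condMI_congr μ (fun ω ω' => Iff.rfl)
          (fun ω ω' => and_congr (hiffB ω ω') Iff.rfl) (fun ω ω' => Iff.rfl)
      have echain : condMI μ U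
            (fun ω => ((fun j : Fin m => Y ⟨j.val, lt_of_lt_of_le j.isLt hm'⟩ ω),
              Y ⟨m, hmn⟩ ω))
            (fun ω => ((fun iz => Z iz ω), K ω, W ω, V ω))
          = condMI μ U
              (fun ω => (fun j : Fin m => Y ⟨j.val, lt_of_lt_of_le j.isLt hm'⟩ ω))
              (fun ω => ((fun iz => Z iz ω), K ω, W ω, V ω))
            + condMI μ U (Y ⟨m, hmn⟩)
              (fun ω => ((fun j : Fin m => Y ⟨j.val, lt_of_lt_of_le j.isLt hm'⟩ ω),
                (fun iz => Z iz ω), K ω, W ω, V ω)) := by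
        rw [condMI_symm μ U
            (fun ω => ((fun j : Fin m => Y ⟨j.val, lt_of_lt_of_le j.isLt hm'⟩ ω),
              Y ⟨m, hmn⟩ ω))
            (fun ω => ((fun iz => Z iz ω), K ω, W ω, V ω)),
          condMI_chain μ
            (fun ω => (fun j : Fin m => Y ⟨j.val, lt_of_lt_of_le j.isLt hm'⟩ ω))
            (Y ⟨m, hmn⟩) U (fun ω => ((fun iz => Z iz ω), K ω, W ω, V ω)),
          condMI_symm μ
            (fun ω => (fun j : Fin m => Y ⟨j.val, lt_of_lt_of_le j.isLt hm'⟩ ω)) U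
            (fun ω => ((fun iz => Z iz ω), K ω, W ω, V ω)),
          condMI_symm μ (Y ⟨m, hmn⟩) U
            (fun ω => ((fun j : Fin m => Y ⟨j.val, lt_of_lt_of_le j.isLt hm'⟩ ω),
              (fun iz => Z iz ω), K ω, W ω, V ω))]
      have hstep := hper ⟨m, hmn⟩
      have hgm : g m = condMI μ (fun ω => f (U ω, K ω) (⟨m, hmn⟩ : Fin n)) (Y ⟨m, hmn⟩)
          (fun ω => (Z ⟨m, hmn⟩ ω, (fun j : Fin m => Y ⟨j.val, lt_trans j.isLt hmn⟩ ω),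
            K ω, W ω, V ω)) := by
        simp only [hg]; rw [dif_pos hmn]
      rw [Finset.sum_range_succ, esplit, echain]
      have ihm := ih hm'
      rw [hgm]
      exact add_le_add ihm hstep
  have hfin := main n le_rfl
  have hsum : ∑ jm ∈ Finset.range n, g jm
      = ∑ i : Fin n, condMI μ (fun ω => f (U ω, K ω) i) (Y i)
          (fun ω => (Z i ω, (fun j : Fin i.val => Y ⟨j.val, j.isLt.trans i.isLt⟩ ω),
            K ω, W ω, V ω)) := by
    rw [← Fin.sum_univ_eq_sum_range]
    apply Finset.sum_congr rfl
    intro i _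
    simp only [hg]; rw [dif_pos i.isLt]
  rw [step1Y, step1Z]
  have goal2 : condMI μ U (fun ω => (fun i => Y i ω)) (fun ω => (K ω, W ω, V ω))
      - condMI μ U (fun ω => (fun i => Z i ω)) (fun ω => (K ω, W ω, V ω))
      ≤ condMI μ U (fun ω => (fun i => Y i ω))
          (fun ω => ((fun i => Z i ω), K ω, W ω, V ω)) := by
    linarith [chainZY, chainYZ, nn1]
  have hfin' : condMI μ U (fun ω => (fun i => Y i ω))
      (fun ω => ((fun iz => Z iz ω), K ω, W ω, V ω))
      ≤ ∑ jm ∈ Finset.range n, g jm := hfin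
  linarith [goal2, hfin', le_of_eq hsum]
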